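/- arXiv:1101.0279 — 2 statements merged into one kernel-verified Lean document; each statement's English description precedes it below -/
import Mathlib

section
/- Let n ≥ 2, σ ∈ (0,2), and 0 < λ ≤ nΛ. Let v : ℝ^n → ℝ be bounded and Lebesgue measurable, and let x ∈ ℝ^n be such that ∫_{ℝ^n} |δv(x,y)|/|y|^{n+σ} dy < ∞. If the matrix h_σ(v,x) is positive semidefinite, then its smallest eigenvalue satisfies λ_min(h_σ(v,x)) ≤ (C/λ)·M⁻(v,x), where C = ((n+σ−2)(n+σ)/2)·A(n,2−σ)/(2−σ). -/
/-! For an admissible `A`, linearity of the integral writes the integral defining `M⁻` as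
`(2 - σ) / C · tr (A h_σ)`. Since `h_σ ≥ λ_min · Id` and `A ≥ 0`, we get
`tr (A h_σ) ≥ λ_min · tr A ≥ λ_min · λ`, so every element of the (nonempty) set defining `M⁻`
is at least `(2 - σ) λ λ_min / C`. -/

open MeasureTheory

noncomputable section

/-- The second difference `δw(x,y) = w(x+y) + w(x-y) - 2 w(x)`. -/
def secondDiff {n : ℕ} (w : EuclideanSpace ℝ (Fin n) → ℝ)
    (x y : EuclideanSpace ℝ (Fin n)) : ℝ :=
  w (x + y) + w (x - y) - 2 * w x

/-- The constant `A(n,α) = π^{α - n/2} Γ((n-α)/2) / Γ(α/2)`. -/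
def rieszA (n : ℕ) (α : ℝ) : ℝ :=
  Real.pi ^ (α - (n : ℝ) / 2) * Real.Gamma (((n : ℝ) - α) / 2) / Real.Gamma (α / 2)

/-- The quadratic form `yᵀ A y`. -/
def quadForm {n : ℕ} (A : Matrix (Fin n) (Fin n) ℝ) (y : EuclideanSpace ℝ (Fin n)) : ℝ :=
  ∑ i, ∑ j, A i j * y i * y j

/-- The matrix `h_σ(v,x)`. -/
def hMat (n : ℕ) (σ : ℝ) (v : EuclideanSpace ℝ (Fin n) → ℝ)
    (x : EuclideanSpace ℝ (Fin n)) : Matrix (Fin n) (Fin n) ℝ :=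
  Matrix.of fun i j =>
    (((n : ℝ) + σ - 2) * ((n : ℝ) + σ) / 2) * rieszA n (2 - σ) *
      ∫ y : EuclideanSpace ℝ (Fin n),
        secondDiff v x y * (y i * y j) / ‖y‖ ^ ((n : ℝ) + σ + 2)

/-- The extremal (minimal) operator `M⁻(v,x)`, an infimum over symmetric positive
semidefinite matrices `A` with `Tr A ≥ λ` and `A ≤ Λ·Id`. -/
def Mminus (n : ℕ) (σ lam Lam : ℝ) (v : EuclideanSpace ℝ (Fin n) → ℝ)
    (x : EuclideanSpace ℝ (Fin n)) : ℝ :=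
  sInf { z | ∃ A : Matrix (Fin n) (Fin n) ℝ, A.PosSemidef ∧ lam ≤ A.trace ∧
      (Lam • (1 : Matrix (Fin n) (Fin n) ℝ) - A).PosSemidef ∧
      z = (2 - σ) * ∫ y : EuclideanSpace ℝ (Fin n),
        secondDiff v x y * quadForm A y / ‖y‖ ^ ((n : ℝ) + σ + 2) }

open scoped MatrixOrder

namespace Matrix

variable {m : Type*} [Fintype m] [DecidableEq m]

theorem PosSemidef.trace_mul_nonneg {A B : Matrix m m ℝ} (hA : A.PosSemidef)
    (hB : B.PosSemidef) : 0 ≤ (A * B).trace := by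
  obtain ⟨C, rfl⟩ := CStarAlgebra.nonneg_iff_eq_star_mul_self.mp hA.nonneg
  rw [Matrix.mul_assoc, trace_mul_comm]
  exact (hB.mul_mul_conjTranspose_same C).trace_nonneg

theorem IsHermitian.posSemidef_sub_smul_one {H : Matrix m m ℝ} (hH : H.IsHermitian) {c : ℝ}
    (h : ∀ i, c ≤ hH.eigenvalues i) : (H - c • 1).PosSemidef := by
  rw [← le_iff, ← Algebra.algebraMap_eq_smul_one,
    algebraMap_le_iff_le_spectrum (isHermitian_iff_isSelfAdjoint.mp hH),
    hH.spectrum_real_eq_range_eigenvalues]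
  rintro _ ⟨i, rfl⟩
  exact h i

theorem IsHermitian.mul_trace_le_trace_mul {A H : Matrix m m ℝ} (hA : A.PosSemidef)
    (hH : H.IsHermitian) {c : ℝ} (h : ∀ i, c ≤ hH.eigenvalues i) :
    c * A.trace ≤ (A * H).trace := by
  have := hA.trace_mul_nonneg (hH.posSemidef_sub_smul_one h)
  rw [Matrix.mul_sub, trace_sub, Matrix.mul_smul, Matrix.mul_one, trace_smul, smul_eq_mul] at this
  linarith

end Matrix

theorem rieszA_pos {n : ℕ} {α : ℝ} (hα : 0 < α) (hαn : α < n) : 0 < rieszA n α := by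
  unfold rieszA
  have := Real.Gamma_pos_of_pos (show 0 < ((n : ℝ) - α) / 2 by linarith)
  have := Real.Gamma_pos_of_pos (show 0 < α / 2 by linarith)
  have := Real.rpow_pos_of_pos Real.pi_pos (α - (n : ℝ) / 2)
  positivity

theorem Measurable.secondDiff {n : ℕ} {v : EuclideanSpace ℝ (Fin n) → ℝ} (hv : Measurable v)
    (x : EuclideanSpace ℝ (Fin n)) : Measurable (secondDiff v x) :=
  ((hv.comp (measurable_const.add measurable_id)).add
    (hv.comp (measurable_const.sub measurable_id))).sub measurable_const

section MomentMatrix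

variable {ι : Type*} [Fintype ι]

def momentMatrix (μ : Measure (EuclideanSpace ℝ ι)) (f : EuclideanSpace ℝ ι → ℝ) (s : ℝ) :
    Matrix ι ι ℝ :=
  Matrix.of fun i j => ∫ y, f y * (y i * y j) / ‖y‖ ^ s ∂μ

theorem EuclideanSpace.abs_mul_apply_le_norm_sq (y : EuclideanSpace ℝ ι) (i j : ι) :
    |y i * y j| ≤ ‖y‖ ^ 2 := by
  rw [abs_mul, sq]
  exact mul_le_mul (PiLp.norm_apply_le y i) (PiLp.norm_apply_le y j) (abs_nonneg _)
    (norm_nonneg _)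

theorem MeasureTheory.Integrable.mul_apply_mul_apply_div_rpow {μ : Measure (EuclideanSpace ℝ ι)}
    {f : EuclideanSpace ℝ ι → ℝ} {s : ℝ} (hf : AEMeasurable f μ)
    (hint : Integrable (fun y => |f y| / ‖y‖ ^ s) μ) (i j : ι) :
    Integrable (fun y => f y * (y i * y j) / ‖y‖ ^ (s + 2)) μ := by
  have hcoord : Measurable fun y : EuclideanSpace ℝ ι => y i * y j := by fun_prop
  refine hint.mono' ((hf.mul hcoord.aemeasurable).div
    (measurable_norm.pow_const _).aemeasurable).aestronglyMeasurable
    (Filter.Eventually.of_forall fun y => ?_)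
  rcases eq_or_ne y 0 with rfl | hy
  · simp only [PiLp.zero_apply, mul_zero, zero_div, norm_zero]
    positivity
  have hy0 : 0 < ‖y‖ := norm_pos_iff.mpr hy
  rw [Real.rpow_add hy0, Real.rpow_two, norm_div, norm_mul, Real.norm_eq_abs, Real.norm_eq_abs,
    Real.norm_of_nonneg (by positivity), mul_comm (‖y‖ ^ s), ← div_div]
  gcongr
  calc |f y| * |y i * y j| / ‖y‖ ^ 2 ≤ |f y| * ‖y‖ ^ 2 / ‖y‖ ^ 2 := by
        gcongr; exact EuclideanSpace.abs_mul_apply_le_norm_sq y i j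
    _ = |f y| := by field_simp

end MomentMatrix

theorem integral_mul_quadForm_div_rpow {n : ℕ} {μ : Measure (EuclideanSpace ℝ (Fin n))}
    {f : EuclideanSpace ℝ (Fin n) → ℝ} {s : ℝ}
    (hint : ∀ i j, Integrable (fun y => f y * (y i * y j) / ‖y‖ ^ s) μ)
    (A : Matrix (Fin n) (Fin n) ℝ) :
    ∫ y, f y * quadForm A y / ‖y‖ ^ s ∂μ = (A * momentMatrix μ f s).trace := by
  have hsum : (fun y => f y * quadForm A y / ‖y‖ ^ s) =
      fun y => ∑ i, ∑ j, A i j * (f y * (y i * y j) / ‖y‖ ^ s) := by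
    ext y
    simp only [quadForm, Finset.mul_sum, Finset.sum_div]
    refine Finset.sum_congr rfl fun i _ => Finset.sum_congr rfl fun j _ => ?_
    ring
  rw [hsum]
  refine (integral_finsetSum _ fun i _ => integrable_finsetSum _ fun j _ =>
    (hint i j).const_mul _).trans (Finset.sum_congr rfl fun i _ => ?_)
  rw [integral_finsetSum _ fun j _ => (hint i j).const_mul _, Matrix.diag_apply, Matrix.mul_apply]
  refine Finset.sum_congr rfl fun j _ => ?_
  simp only [momentMatrix, Matrix.of_apply, integral_const_mul]
  congr 2 with y
  ring

theorem le_Mminus {n : ℕ} {σ lam Lam b : ℝ} {v : EuclideanSpace ℝ (Fin n) → ℝ}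
    {x : EuclideanSpace ℝ (Fin n)} (hn : n ≠ 0) (hlam : 0 ≤ lam) (hlamLam : lam ≤ n * Lam)
    (hb : ∀ A : Matrix (Fin n) (Fin n) ℝ, A.PosSemidef → lam ≤ A.trace →
      b ≤ (2 - σ) * ∫ y, secondDiff v x y * quadForm A y / ‖y‖ ^ ((n : ℝ) + σ + 2)) :
    b ≤ Mminus n σ lam Lam v x := by
  have hn' : (0 : ℝ) < n := by positivity
  -- `sInf ∅ = 0`, so the admissible matrix `(λ / n) • 1` is essential.
  refine le_csInf ⟨_, (lam / n) • 1, .smul .one (by positivity), ?_, ?_, rfl⟩ ?_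
  · simp [Matrix.trace_smul, hn'.ne']
  · rw [← sub_smul]
    exact .smul .one (by rw [sub_nonneg, div_le_iff₀ hn']; linarith)
  · rintro _ ⟨A, hA, htr, -, rfl⟩
    exact hb A hA htr

theorem stmt0_general (n : ℕ) (hn : 2 ≤ n) (σ lam Lam : ℝ) (hσ : σ ∈ Set.Ioo (0 : ℝ) 2)
    (hlam : 0 < lam) (hlamLam : lam ≤ (n : ℝ) * Lam)
    (v : EuclideanSpace ℝ (Fin n) → ℝ)
    (hm : Measurable v)
    (x : EuclideanSpace ℝ (Fin n))
    (hint : Integrable (fun y : EuclideanSpace ℝ (Fin n) =>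
      |secondDiff v x y| / ‖y‖ ^ ((n : ℝ) + σ)))
    (hpsd : (hMat n σ v x).PosSemidef) :
    (⨅ i, hpsd.1.eigenvalues i) ≤
      ((((n : ℝ) + σ - 2) * ((n : ℝ) + σ) / 2) * rieszA n (2 - σ) / (2 - σ)) / lam *
        Mminus n σ lam Lam v x := by
  obtain ⟨hσ0, hσ2⟩ := hσ
  have hn' : (2 : ℝ) ≤ n := by exact_mod_cast hn
  have : NeZero n := ⟨by omega⟩
  set c := ((n : ℝ) + σ - 2) * ((n : ℝ) + σ) / 2 * rieszA n (2 - σ)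
  have hc : 0 < c := by
    have := rieszA_pos (n := n) (α := 2 - σ) (by linarith) (by linarith)
    have : 0 < (n : ℝ) + σ - 2 := by linarith
    positivity
  set e := ⨅ i, hpsd.1.eigenvalues i
  have he : ∀ i, e ≤ hpsd.1.eigenvalues i := fun i => ciInf_le (Set.finite_range _).bddBelow i
  have he0 : 0 ≤ e := le_ciInf hpsd.eigenvalues_nonneg
  have hH : hMat n σ v x = c • momentMatrix volume (secondDiff v x) ((n : ℝ) + σ + 2) := by
    ext i j
    rfl
  have hM : (2 - σ) * (e * lam / c) ≤ Mminus n σ lam Lam v x := by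
    refine le_Mminus (by omega) hlam.le hlamLam fun A hA htr => ?_
    rw [integral_mul_quadForm_div_rpow
      (hint.mul_apply_mul_apply_div_rpow (hm.secondDiff x).aemeasurable) A]
    have := hpsd.1.mul_trace_le_trace_mul hA he
    rw [hH, Matrix.mul_smul, Matrix.trace_smul, smul_eq_mul] at this
    gcongr
    rw [div_le_iff₀ hc]
    calc e * lam ≤ e * A.trace := by gcongr
      _ ≤ _ := by linarith
  calc e = c / (2 - σ) / lam * ((2 - σ) * (e * lam / c)) := by field_simp
    _ ≤ _ := by gcongr

/-- if `h_σ(v,x)` is positive semidefinite, its smallest eigenvalue is at most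
`(C/λ)·M⁻(v,x)` with `C = ((n+σ-2)(n+σ)/2)·A(n,2-σ)/(2-σ)`. -/
theorem stmt0 (n : ℕ) (hn : 2 ≤ n) (σ lam Lam : ℝ) (hσ : σ ∈ Set.Ioo (0 : ℝ) 2)
    (hlam : 0 < lam) (hlamLam : lam ≤ (n : ℝ) * Lam)
    (v : EuclideanSpace ℝ (Fin n) → ℝ)
    (hb : ∃ C : ℝ, ∀ z, |v z| ≤ C) (hm : Measurable v)
    (x : EuclideanSpace ℝ (Fin n))
    (hint : Integrable (fun y : EuclideanSpace ℝ (Fin n) =>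
      |secondDiff v x y| / ‖y‖ ^ ((n : ℝ) + σ)))
    (hpsd : (hMat n σ v x).PosSemidef) :
    (⨅ i, hpsd.1.eigenvalues i) ≤
      ((((n : ℝ) + σ - 2) * ((n : ℝ) + σ) / 2) * rieszA n (2 - σ) / (2 - σ)) / lam *
        Mminus n σ lam Lam v x :=
  stmt0_general n hn σ lam Lam hσ hlam hlamLam v hm x hint hpsd
end
end

section
/- Let n ≥ 2, σ ∈ (0,2), λ > 0, f₀ > 0 and ρ₀ > 0. Let Γ : ℝ^n → ℝ be Lebesgue measurable, bounded below, and attain its global minimum at a point x₀ ∈ ℝ^n. Define A := {y ∈ ℝ^n : Γ(x₀+y) − Γ(x₀) ≤ f₀|y|^σ}, r_k := ρ₀·2^{−k}, and the rings R_k := {y ∈ ℝ^n : r_{k+1} < |y| ≤ r_k} for k ∈ ℕ. Assume that λ(2−σ)·∫_{ℝ^n} δΓ(x₀,y)·y₁²/|y|^{n+σ+2} dy ≤ f₀, where y₁ denotes the first coordinate of y (the integrand is nonnegative since x₀ is a global minimum). Then there is a constant C(n) > 0 depending only on n such that the number of indices k ∈ ℕ with |Aᶜ ∩ R_k| ≥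 ½|R_k| is at most C(n)/((2−σ)λ), where |·| denotes Lebesgue measure. -/
/-!
Removing from a dyadic ring `r/2 < |y| ≤ r` the slab `|y₁| ≤ ε r` costs only a fixed fraction
of its volume, so on a bad ring the set `Aᶜ` still has measure `≳ rⁿ` off the slab. There
`δΓ(x₀,y) ≥ Γ(x₀+y) - Γ(x₀) > f₀|y|^σ` by minimality of `x₀`, and `y₁² ≥ ε²r²`, so the
integrand is `≳ f₀ / rⁿ`: each bad ring contributes at least `c(n) f₀` to the integral,
uniformly in `k` and `σ`. The rings are disjoint, hence `#bad · c(n) f₀ ≤ f₀ / (λ(2-σ))`.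
-/

open MeasureTheory

noncomputable section

open Metric Function
open scoped ENNReal

theorem MeasureTheory.Measure.addHaar_annulus {E : Type*} [NormedAddCommGroup E]
    [NormedSpace ℝ E] [MeasurableSpace E] [BorelSpace E] [FiniteDimensional ℝ E]
    (μ : Measure E) [μ.IsAddHaarMeasure] {s r : ℝ} (hs : 0 ≤ s) (hsr : s ≤ r) :
    μ {y | s < ‖y‖ ∧ ‖y‖ ≤ r} =
      ENNReal.ofReal (r ^ Module.finrank ℝ E - s ^ Module.finrank ℝ E) * μ (ball 0 1) := by
  have hset : {y : E | s < ‖y‖ ∧ ‖y‖ ≤ r} = closedBall 0 r \ closedBall 0 s := by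
    ext y; simp [and_comm]
  rw [hset, measure_sdiff (closedBall_subset_closedBall hsr)
      measurableSet_closedBall.nullMeasurableSet measure_closedBall_lt_top.ne,
    μ.addHaar_closedBall _ (hs.trans hsr), μ.addHaar_closedBall _ hs,
    ← ENNReal.sub_mul (fun _ _ => measure_ball_lt_top.ne), ENNReal.ofReal_sub _ (by positivity)]

theorem pairwise_disjoint_dyadic_annuli {E : Type*} [SeminormedAddCommGroup E] {ρ : ℝ}
    (hρ : 0 ≤ ρ) :
    Pairwise (Disjoint on fun k : ℕ => {y : E | ρ / 2 ^ k / 2 < ‖y‖ ∧ ‖y‖ ≤ ρ / 2 ^ k}) := by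
  refine (pairwise_disjoint_on _).2 fun j k hjk => Set.disjoint_left.2 fun y hj hk => ?_
  have : ρ / 2 ^ k ≤ ρ / 2 ^ j / 2 := by
    rw [div_div, ← pow_succ]
    exact div_le_div_of_nonneg_left hρ (by positivity) (pow_le_pow_right₀ one_le_two hjk)
  exact (hk.2.trans this).not_gt hj.1

theorem MeasureTheory.encard_mul_le_lintegral {α β : Type*} [MeasurableSpace α] [Countable β]
    {μ : Measure α} {E : β → Set α} (hEm : ∀ k, MeasurableSet (E k))
    (hE : Pairwise (Disjoint on E)) {f : α → ℝ≥0∞} {S : Set β} {a : ℝ≥0∞}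
    (h : ∀ k ∈ S, a ≤ ∫⁻ x in E k, f x ∂μ) :
    S.encard * a ≤ ∫⁻ x, f x ∂μ :=
  calc S.encard * a = ∑' _ : S, a := (ENNReal.tsum_set_const S a).symm
    _ ≤ ∑' k : S, ∫⁻ x in E k, f x ∂μ := ENNReal.tsum_le_tsum fun k => h k k.2
    _ = ∫⁻ x in ⋃ k ∈ S, E k, f x ∂μ :=
      (lintegral_biUnion S.to_countable (fun k _ => hEm k) (hE.set_pairwise S) f).symm
    _ ≤ ∫⁻ x, f x ∂μ := setLIntegral_le_lintegral _ _

theorem Set.finite_and_natCard_le_of_encard_mul_le {β : Type*} {S : Set β} {a b : ℝ}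
    (ha : 0 < a) (hb : 0 ≤ b) (h : S.encard * ENNReal.ofReal a ≤ ENNReal.ofReal b) :
    S.Finite ∧ (Nat.card S : ℝ) ≤ b / a := by
  have hfin : S.Finite := by
    by_contra hS
    rw [Set.encard_eq_top hS, ENat.toENNReal_top, ENNReal.top_mul (by simpa using ha)] at h
    exact ENNReal.ofReal_ne_top (top_le_iff.1 h)
  refine ⟨hfin, ?_⟩
  rw [← hfin.cast_ncard_eq, ENat.toENNReal_coe, ← ENNReal.ofReal_natCast,
    ← ENNReal.ofReal_mul (Nat.cast_nonneg _), ENNReal.ofReal_le_ofReal_iff hb] at h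
  rwa [Nat.card_coe_set_eq, le_div_iff₀ ha]

theorem div_pow_le_mul_sq_div_rpow {n : ℕ} {σ c ε r t a d : ℝ} (hc : 0 ≤ c) (hε : 0 ≤ ε)
    (ht : 0 < t) (htr : t ≤ r) (ha : ε * r ≤ |a|) (hd : c * t ^ σ ≤ d) :
    c * ε ^ 2 / r ^ n ≤ d * a ^ 2 / t ^ ((n : ℝ) + σ + 2) := by
  have hr : 0 < r := ht.trans_le htr
  have hsplit : t ^ ((n : ℝ) + σ + 2) = t ^ σ * (t ^ n * t ^ 2) := by
    rw [Real.rpow_add ht, Real.rpow_add ht, Real.rpow_natCast, Real.rpow_two]; ring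
  have ha2 : (ε * r) ^ 2 ≤ a ^ 2 := sq_abs a ▸ pow_le_pow_left₀ (by positivity) ha 2
  calc c * ε ^ 2 / r ^ n = c * (ε * r) ^ 2 / (r ^ n * r ^ 2) := by field_simp
    _ ≤ c * a ^ 2 / (t ^ n * t ^ 2) := by gcongr
    _ = c * t ^ σ * a ^ 2 / t ^ ((n : ℝ) + σ + 2) := by
      rw [hsplit]; field_simp [(Real.rpow_pos_of_pos ht σ).ne']
    _ ≤ d * a ^ 2 / t ^ ((n : ℝ) + σ + 2) := by gcongr

section Euclidean

variable {n : ℕ}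

theorem EuclideanSpace.volume_abs_apply_le_inter_norm_le (i : Fin n) (δ r : ℝ) :
    volume {y : EuclideanSpace ℝ (Fin n) | |y i| ≤ δ ∧ ‖y‖ ≤ r} ≤
      ENNReal.ofReal (2 * δ) * ENNReal.ofReal (2 * r) ^ (n - 1) := by
  let side : Fin n → Set ℝ := fun j => if j = i then Set.Icc (-δ) δ else Set.Icc (-r) r
  have hsub : {y : EuclideanSpace ℝ (Fin n) | |y i| ≤ δ ∧ ‖y‖ ≤ r} ⊆
      (MeasurableEquiv.toLp 2 (Fin n → ℝ)).symm ⁻¹' Set.univ.pi side := by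
    intro y ⟨hyi, hy⟩ j _
    change y j ∈ if j = i then Set.Icc (-δ) δ else Set.Icc (-r) r
    split
    · subst j; exact abs_le.1 hyi
    · exact abs_le.1 ((Real.norm_eq_abs _ ▸ PiLp.norm_apply_le y j).trans hy)
  have hside : ∀ j ∈ ({i}ᶜ : Finset (Fin n)), volume (side j) = ENNReal.ofReal (2 * r) := by
    intro j hj
    simp only [side, if_neg (show j ≠ i by simpa using hj), Real.volume_Icc, sub_neg_eq_add,
      ← two_mul]
  calc _ ≤ volume ((MeasurableEquiv.toLp 2 (Fin n → ℝ)).symm ⁻¹' Set.univ.pi side) :=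
        measure_mono hsub
    _ = volume (Set.univ.pi side) :=
        (EuclideanSpace.volume_preserving_symm_measurableEquiv_toLp (Fin n)).measure_preimage
          (MeasurableSet.univ_pi fun j => by
            dsimp only [side]; split <;> exact measurableSet_Icc).nullMeasurableSet
    _ = _ := by
      rw [volume_pi_pi, Fintype.prod_eq_mul_prod_compl i, Finset.prod_congr rfl hside]
      simp only [side, if_pos rfl]
      rw [Real.volume_Icc, Finset.prod_const, Finset.card_compl,
        Finset.card_singleton, Fintype.card_fin, sub_neg_eq_add, ← two_mul]

variable (n) in
def unitBallVolume : ℝ := (volume (ball (0 : EuclideanSpace ℝ (Fin n)) 1)).toReal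

theorem unitBallVolume_pos : 0 < unitBallVolume n :=
  ENNReal.toReal_pos (measure_ball_pos volume _ one_pos).ne' measure_ball_lt_top.ne

theorem ofReal_unitBallVolume :
    ENNReal.ofReal (unitBallVolume n) = volume (ball (0 : EuclideanSpace ℝ (Fin n)) 1) :=
  ENNReal.ofReal_toReal measure_ball_lt_top.ne

/- Chosen so that the slab `|y i| ≤ slabWidth n * r` inside `closedBall 0 r` has at most
an eighth of the volume of `ball 0 r`. -/
variable (n) in
def slabWidth : ℝ := unitBallVolume n / 2 ^ (n + 3)

theorem slabWidth_pos : 0 < slabWidth n := div_pos unitBallVolume_pos (by positivity)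

theorem volume_inter_slabWidth_mul_lt_abs_apply (i : Fin n) {r : ℝ} (hr : 0 < r)
    {F : Set (EuclideanSpace ℝ (Fin n))} (hF : F ⊆ {y | r / 2 < ‖y‖ ∧ ‖y‖ ≤ r})
    (hvol : volume {y : EuclideanSpace ℝ (Fin n) | r / 2 < ‖y‖ ∧ ‖y‖ ≤ r} ≤ 2 * volume F) :
    ENNReal.ofReal (unitBallVolume n * r ^ n / 8) ≤
      volume (F ∩ {y | slabWidth n * r < |y i|}) := by
  obtain ⟨m, rfl⟩ : ∃ m, n = m + 1 := ⟨n - 1, (Nat.sub_add_cancel i.pos).symm⟩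
  set ω := unitBallVolume (m + 1)
  set X := ENNReal.ofReal (ω * r ^ (m + 1) / 8) with hX
  have hannulus :
      2 * (2 * X) ≤ volume {y : EuclideanSpace ℝ (Fin (m + 1)) | r / 2 < ‖y‖ ∧ ‖y‖ ≤ r} := by
    have hhalf : (r / 2) ^ (m + 1) ≤ r ^ (m + 1) / 2 := by
      rw [div_pow]
      gcongr
      exact le_self_pow₀ one_le_two m.succ_ne_zero
    have hω : 0 < ω := unitBallVolume_pos
    have hrm := pow_pos hr (m + 1)
    rw [Measure.addHaar_annulus volume (by positivity) (by linarith), finrank_euclideanSpace_fin,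
      ← ofReal_unitBallVolume, ← ENNReal.ofReal_mul (by linarith), hX, ← ENNReal.ofReal_ofNat,
      ← ENNReal.ofReal_mul zero_le_two, ← ENNReal.ofReal_mul zero_le_two]
    exact ENNReal.ofReal_le_ofReal (by nlinarith)
  have hslab : volume {y : EuclideanSpace ℝ (Fin (m + 1)) |
      |y i| ≤ slabWidth (m + 1) * r ∧ ‖y‖ ≤ r} ≤ X := by
    refine (EuclideanSpace.volume_abs_apply_le_inter_norm_le i _ r).trans_eq ?_
    have := (slabWidth_pos (n := m + 1)).le
    rw [hX, ← ENNReal.ofReal_pow (by positivity), ← ENNReal.ofReal_mul (by positivity)]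
    congr 1
    simp only [slabWidth, Nat.add_sub_cancel]
    field_simp
    ring
  have hcover : F ⊆ (F ∩ {y | slabWidth (m + 1) * r < |y i|}) ∪
      {y | |y i| ≤ slabWidth (m + 1) * r ∧ ‖y‖ ≤ r} := fun y hy =>
    (lt_or_ge (slabWidth (m + 1) * r) |y i|).imp (⟨hy, ·⟩) (⟨·, (hF hy).2⟩)
  have : 2 * X ≤ volume (F ∩ {y | slabWidth (m + 1) * r < |y i|}) + X := by
    refine (ENNReal.mul_le_mul_iff_right two_ne_zero ENNReal.ofNat_ne_top).1 ?_
    calc 2 * (2 * X) ≤ 2 * volume F := hannulus.trans hvol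
      _ ≤ _ := by
        gcongr
        exact (measure_mono hcover).trans ((measure_union_le _ _).trans (by gcongr))
  exact ENNReal.le_of_add_le_add_right ENNReal.ofReal_ne_top (two_mul X ▸ this)

theorem sub_le_secondDiff {w : EuclideanSpace ℝ (Fin n) → ℝ}
    {x : EuclideanSpace ℝ (Fin n)} (hmin : ∀ z, w x ≤ w z) (y : EuclideanSpace ℝ (Fin n)) :
    w (x + y) - w x ≤ secondDiff w x y := by
  unfold secondDiff; linarith [hmin (x - y)]

variable (n) in
def badRingConstant : ℝ := slabWidth n ^ 2 * unitBallVolume n / 8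

theorem badRingConstant_pos : 0 < badRingConstant n := by
  have := slabWidth_pos (n := n)
  have := unitBallVolume_pos (n := n)
  unfold badRingConstant; positivity

theorem ofReal_mul_badRingConstant_le_setLIntegral (i : Fin n)
    {Γ : EuclideanSpace ℝ (Fin n) → ℝ} {x₀ : EuclideanSpace ℝ (Fin n)} (hmin : ∀ z, Γ x₀ ≤ Γ z)
    {σ f₀ r : ℝ} (hf₀ : 0 ≤ f₀) (hr : 0 < r) {F : Set (EuclideanSpace ℝ (Fin n))}
    (hFm : MeasurableSet F) (hF : ∀ y ∈ F, f₀ * ‖y‖ ^ σ < Γ (x₀ + y) - Γ x₀)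
    (hFr : F ⊆ {y | r / 2 < ‖y‖ ∧ ‖y‖ ≤ r})
    (hbad : volume {y : EuclideanSpace ℝ (Fin n) | r / 2 < ‖y‖ ∧ ‖y‖ ≤ r} ≤ 2 * volume F) :
    ENNReal.ofReal (f₀ * badRingConstant n) ≤ ∫⁻ y in F ∩ {y | slabWidth n * r < |y i|},
      ENNReal.ofReal (secondDiff Γ x₀ y * y i ^ 2 / ‖y‖ ^ ((n : ℝ) + σ + 2)) := by
  set G := F ∩ {y | slabWidth n * r < |y i|}
  set m := f₀ * slabWidth n ^ 2 / r ^ n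
  have hpoint : ∀ y ∈ G, ENNReal.ofReal m ≤
      ENNReal.ofReal (secondDiff Γ x₀ y * y i ^ 2 / ‖y‖ ^ ((n : ℝ) + σ + 2)) :=
    fun y ⟨hyF, hyi⟩ => ENNReal.ofReal_le_ofReal <|
      div_pow_le_mul_sq_div_rpow hf₀ slabWidth_pos.le ((half_pos hr).trans (hFr hyF).1)
        (hFr hyF).2 hyi.le ((hF y hyF).le.trans (sub_le_secondDiff hmin y))
  calc ENNReal.ofReal (f₀ * badRingConstant n)
      = ENNReal.ofReal m * ENNReal.ofReal (unitBallVolume n * r ^ n / 8) := by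
        rw [← ENNReal.ofReal_mul (by positivity)]
        congr 1
        unfold m badRingConstant
        field_simp [(pow_pos hr n).ne']
    _ ≤ ENNReal.ofReal m * volume G := by
        gcongr; exact volume_inter_slabWidth_mul_lt_abs_apply i hr hFr hbad
    _ = ∫⁻ _ in G, ENNReal.ofReal m := (setLIntegral_const _ _).symm
    _ ≤ _ := setLIntegral_mono' (hFm.inter (measurableSet_lt measurable_const (by fun_prop))) hpoint

end Euclidean

/-- the number of "bad" dyadic rings `R_k` on which the complement of the set
`A = {y : Γ(x₀+y) - Γ(x₀) ≤ f₀ |y|^σ}` covers at least half of the ring is at most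
`C(n)/((2-σ)λ)`. -/
theorem stmt4 (n : ℕ) (hn : 2 ≤ n) :
    ∃ C : ℝ, 0 < C ∧
      ∀ (σ lam f₀ ρ₀ : ℝ), σ ∈ Set.Ioo (0 : ℝ) 2 → 0 < lam → 0 < f₀ → 0 < ρ₀ →
      ∀ (Γ : EuclideanSpace ℝ (Fin n) → ℝ), Measurable Γ →
      ∀ x₀ : EuclideanSpace ℝ (Fin n),
      (∀ z, Γ x₀ ≤ Γ z) →
      (ENNReal.ofReal (lam * (2 - σ)) *
          ∫⁻ y : EuclideanSpace ℝ (Fin n),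
            ENNReal.ofReal (secondDiff Γ x₀ y * (y (⟨0, by omega⟩ : Fin n)) ^ 2 / ‖y‖ ^ ((n : ℝ) + σ + 2))
        ≤ ENNReal.ofReal f₀) →
      -- the set `A` and the rings `R_k`
      (let A : Set (EuclideanSpace ℝ (Fin n)) :=
          {y | Γ (x₀ + y) - Γ x₀ ≤ f₀ * ‖y‖ ^ σ}
       let R : ℕ → Set (EuclideanSpace ℝ (Fin n)) :=
          fun k => {y | ρ₀ / 2 ^ (k + 1) < ‖y‖ ∧ ‖y‖ ≤ ρ₀ / 2 ^ k}
       let bad : Set ℕ := {k | volume (R k) ≤ 2 * volume (Aᶜ ∩ R k)}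
       bad.Finite ∧ (Nat.card bad : ℝ) ≤ C / ((2 - σ) * lam)) := by
  have hc := badRingConstant_pos (n := n)
  refine ⟨1 / badRingConstant n, by positivity, ?_⟩
  rintro σ lam f₀ ρ₀ ⟨-, hσ2⟩ hlam hf₀ hρ₀ Γ hΓ x₀ hmin hint A R bad
  set i₀ : Fin n := ⟨0, by omega⟩
  have hR : ∀ k, R k = {y | ρ₀ / 2 ^ k / 2 < ‖y‖ ∧ ‖y‖ ≤ ρ₀ / 2 ^ k} := fun k => by
    simp only [R, pow_succ, div_div]
  have hFm : ∀ k, MeasurableSet (Aᶜ ∩ R k) := fun k =>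
    (measurableSet_le (by fun_prop) (by fun_prop)).compl.inter
      ((measurableSet_lt measurable_const measurable_norm).inter
        (measurableSet_le measurable_norm measurable_const))
  let E : ℕ → Set (EuclideanSpace ℝ (Fin n)) :=
    fun k => Aᶜ ∩ R k ∩ {y | slabWidth n * (ρ₀ / 2 ^ k) < |y i₀|}
  have hring : ∀ k ∈ bad, ENNReal.ofReal (f₀ * badRingConstant n) ≤
      ∫⁻ y in E k, ENNReal.ofReal (secondDiff Γ x₀ y * y i₀ ^ 2 / ‖y‖ ^ ((n : ℝ) + σ + 2)) := fun k hk =>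
    ofReal_mul_badRingConstant_le_setLIntegral i₀ hmin hf₀.le (by positivity) (hFm k)
      (fun _ hy => not_le.1 hy.1) (hR k ▸ Set.inter_subset_right) (hR k ▸ hk)
  have hdisj : Pairwise (Disjoint on E) :=
    (pairwise_disjoint_dyadic_annuli hρ₀.le).mono fun j k h =>
      h.mono (fun _ hy => (hR j).subset hy.1.2) (fun _ hy => (hR k).subset hy.1.2)
  have hcount := encard_mul_le_lintegral
    (fun k => (hFm k).inter (measurableSet_lt measurable_const (by fun_prop))) hdisj hring
  have h2σ : 0 < 2 - σ := sub_pos.2 hσ2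
  refine (Set.finite_and_natCard_le_of_encard_mul_le
    (a := lam * (2 - σ) * (f₀ * badRingConstant n)) (by positivity) hf₀.le ?_).imp_right
    fun h => h.trans_eq ?_
  · rw [ENNReal.ofReal_mul (by positivity), mul_left_comm]
    grw [hcount]
    exact hint
  · field_simp
end
end
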